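/- arXiv:1004.2126 — 2 statements merged into one kernel-verified Lean document; each statement's English description precedes it below -/
import Mathlib

section
/- Let X be a compact metric space, n ≥ 2 an integer, and f, h : X → X homeomorphisms satisfying h ∘ f ∘ h⁻¹ = fⁿ. Assume that per(f) is nonempty and that no positive power of f is the identity (as holds for any faithful action of BS(1,n)). Then the action of the group generated by f and h is not minimal: there exists a nonempty closed proper subset K ⊊ X with f(K) = K and h(K) = K; equivalently, some point of X has non-dense orbit under the group generated by f and h. -/
/-!
Pick a periodic point of `f`, of period `p`, and let `F` be the set of all `p`-periodic points. Since
`h ∘ f = fⁿ ∘ h` with `h` injective, a point whose `h`-image lies in `F` lies in `F` itself, i.e.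
`h⁻¹(F) ⊆ F`. The points whose whole forward `h`-orbit stays in `F` form a closed set which is
nonempty by Cantor's intersection theorem and `h`-invariant. It is also `f`-invariant, because
`hᵏ ∘ f = f^(nᵏ) ∘ hᵏ` and `F` is invariant under every power of `f`; and it is proper, because
`F ≠ X` as soon as `fᵖ ≠ id`.
-/

open Function Set

namespace Function.Semiconj

variable {α β : Type*}

theorem preimage_ptsOfPeriod {fa : α → α} {fb : β → β} {g : α → β} (hg : Semiconj g fa fb)
    (hinj : Injective g) (p : ℕ) : g ⁻¹' ptsOfPeriod fb p = ptsOfPeriod fa p := by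
  refine Subset.antisymm (fun x hx => hinj ?_) (hg.mapsTo_ptsOfPeriod p)
  rw [(hg.iterate_right p).eq x]
  exact hx

theorem iterate_left_pow {f h : α → α} {n : ℕ} (hs : Semiconj h f f^[n]) (k : ℕ) :
    Semiconj h^[k] f f^[n ^ k] := by
  have step (j : ℕ) : Semiconj h f^[n ^ j] f^[n ^ (j + 1)] := by
    rw [pow_succ', iterate_mul]
    exact hs.iterate_right _
  simpa using iterate_left step k 0

theorem preimage_ptsOfPeriod_subset {f h : α → α} {n : ℕ} (hs : Semiconj h f f^[n])
    (hinj : Injective h) (p : ℕ) : h ⁻¹' ptsOfPeriod f p ⊆ ptsOfPeriod f p := by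
  refine (preimage_mono fun x hx => ?_).trans (hs.preimage_ptsOfPeriod hinj p).subset
  exact IsPeriodicPt.iterate hx n

theorem preimage_iInter_preimage_iterate_ptsOfPeriod {f h : α → α} {n : ℕ}
    (hs : Semiconj h f f^[n]) (hinj : Injective f) (p : ℕ) :
    f ⁻¹' ⋂ k, h^[k] ⁻¹' ptsOfPeriod f p = ⋂ k, h^[k] ⁻¹' ptsOfPeriod f p := by
  simp only [preimage_iInter, ← preimage_comp, (hs.iterate_left_pow _).comp_eq]
  refine iInter_congr fun k => ?_
  rw [preimage_comp, (Commute.iterate_self f _).preimage_ptsOfPeriod (hinj.iterate _) p]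

end Function.Semiconj

section BackwardInvariant

variable {X : Type*} {h : X → X} {F : Set X}

theorem image_iInter_preimage_iterate (hsurj : Surjective h) (hF : h ⁻¹' F ⊆ F) :
    h '' ⋂ k, h^[k] ⁻¹' F = ⋂ k, h^[k] ⁻¹' F := by
  refine Subset.antisymm ?_ fun y hy => ?_
  · rintro _ ⟨x, hx, rfl⟩
    refine mem_iInter.2 fun k => ?_
    simpa only [mem_preimage, iterate_succ_apply] using mem_iInter.1 hx (k + 1)
  · obtain ⟨x, rfl⟩ := hsurj y
    refine ⟨x, mem_iInter.2 ?_, rfl⟩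
    rintro (_ | k)
    · exact hF (mem_iInter.1 hy 0)
    · simpa only [mem_preimage, iterate_succ_apply] using mem_iInter.1 hy k

theorem nonempty_iInter_preimage_iterate [TopologicalSpace X] [CompactSpace X]
    (hcont : Continuous h) (hsurj : Surjective h) (hclosed : IsClosed F) (hne : F.Nonempty)
    (hF : h ⁻¹' F ⊆ F) : (⋂ k, h^[k] ⁻¹' F).Nonempty := by
  refine IsCompact.nonempty_iInter_of_sequence_nonempty_isCompact_isClosed _ (fun k => ?_)
    (fun k => hne.preimage (hsurj.iterate k)) hclosed.isCompact
    (fun k => hclosed.preimage (hcont.iterate k))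
  rw [iterate_succ', preimage_comp]
  exact preimage_mono hF

end BackwardInvariant

theorem bs_action_not_minimal_general
    {X : Type*} [MetricSpace X] [CompactSpace X]
    (n : ℕ) (f h : X ≃ₜ X)
    (hrel : ∀ x : X, h (f (h.symm x)) = (⇑f)^[n] x)
    (hper : ∃ x : X, ∃ p : ℕ, 1 ≤ p ∧ (⇑f)^[p] x = x)
    (hfaith : ∀ p : ℕ, 1 ≤ p → (⇑f)^[p] ≠ id) :
    ∃ K : Set X, K.Nonempty ∧ IsClosed K ∧ K ≠ Set.univ ∧
      ⇑f '' K = K ∧ ⇑h '' K = K := by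
  obtain ⟨x₀, p, hp, hx₀⟩ := hper
  have hs : Semiconj h f f^[n] := fun x => by simpa using hrel (h x)
  have hback := hs.preimage_ptsOfPeriod_subset h.injective p
  have hclosed : IsClosed (ptsOfPeriod f p) := isClosed_fixedPoints (f.continuous.iterate p)
  refine ⟨⋂ k, (⇑h)^[k] ⁻¹' ptsOfPeriod f p,
    nonempty_iInter_preimage_iterate h.continuous h.surjective hclosed ⟨x₀, hx₀⟩ hback,
    isClosed_iInter fun k => hclosed.preimage (h.continuous.iterate k), fun hK => ?_, ?_,
    image_iInter_preimage_iterate h.surjective hback⟩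
  · refine hfaith p hp (funext fun x => ?_)
    exact mem_iInter.1 (hK ▸ mem_univ x) 0
  · nth_rw 1 [← hs.preimage_iInter_preimage_iterate_ptsOfPeriod f.injective p]
    exact image_preimage_eq _ f.surjective

/-- if `per(f) ≠ ∅` and no positive power of `f` is the identity, then the
action generated by `f` and `h` is not minimal: there is a nonempty closed proper subset
invariant under both `f` and `h`. -/
theorem bs_action_not_minimal
    {X : Type*} [MetricSpace X] [CompactSpace X]
    (n : ℕ) (hn : 2 ≤ n) (f h : X ≃ₜ X)
    (hrel : ∀ x : X, h (f (h.symm x)) = (⇑f)^[n] x)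
    (hper : ∃ x : X, ∃ p : ℕ, 1 ≤ p ∧ (⇑f)^[p] x = x)
    (hfaith : ∀ p : ℕ, 1 ≤ p → (⇑f)^[p] ≠ id) :
    ∃ K : Set X, K.Nonempty ∧ IsClosed K ∧ K ≠ Set.univ ∧
      ⇑f '' K = K ∧ ⇑h '' K = K :=
  bs_action_not_minimal_general n f h hrel hper hfaith
end

section
/- Let n ≥ 2 be an integer. Let F be a homeomorphism of ℝ² satisfying F(x + P) = F(x) + P for all x ∈ ℝ² and P ∈ ℤ², and let H be a homeomorphism of ℝ² for which there is a matrix A ∈ GL(2, ℤ) with H(x + P) = H(x) + A·P for all x ∈ ℝ² and P ∈ ℤ². Assume there is an integer vector P₀ ∈ ℤ² such that H ∘ F ∘ H⁻¹(x) = Fⁿ(x) + P₀ for all x ∈ ℝ² (i.e., F and H are lifts of torus homeomorphisms f and h with h ∘ f ∘ h⁻¹ = fⁿ). Then there exists an integer vector Q ∈ ℤ² such that ρ(F) = (1/n) · (A(ρ(F)) + Q), i.e., ρ(F) = { (1/n)(A·v + Q) : v ∈ ρ(F) }. -/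
open Filter Topology

/-- The rotation set of a map `G : ℝ² → ℝ²` (commuting with integer translations):
the set of vectors `v` for which there are points `xᵢ` and positive integers `mᵢ → ∞`
with `(G^{mᵢ}(xᵢ) − xᵢ)/mᵢ → v`. -/
def rotSet (G : ℝ × ℝ → ℝ × ℝ) : Set (ℝ × ℝ) :=
  {v | ∃ (x : ℕ → ℝ × ℝ) (m : ℕ → ℕ), (∀ i, 0 < m i) ∧ Tendsto m atTop atTop ∧
    Tendsto (fun i => ((m i : ℝ))⁻¹ • (G^[m i] (x i) - x i)) atTop (nhds v)}

/-- The linear action of an integer 2×2 matrix on `ℝ²`. -/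
def matAct (A : Matrix (Fin 2) (Fin 2) ℤ) (v : ℝ × ℝ) : ℝ × ℝ :=
  ((A 0 0 : ℝ) * v.1 + (A 0 1 : ℝ) * v.2, (A 1 0 : ℝ) * v.1 + (A 1 1 : ℝ) * v.2)

open Function Set Pointwise

/-! Conjugation by `H`, which stays at bounded distance from the linear map `A`, transports
rotation vectors linearly, so `ρ(H F H⁻¹) = A ρ(F)`. On the other hand `H F H⁻¹ = Fⁿ + P₀`, and
because `F` moves points by a bounded amount, `ρ(Fⁿ + P₀) = n ρ(F) + P₀`. Comparing the two
descriptions gives `ρ(F) = (1/n)(A ρ(F) − P₀)`. -/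

lemma tendsto_inv_smul_zero_of_norm_le {E : Type*} [NormedAddCommGroup E] [NormedSpace ℝ E]
    {e : ℕ → E} {m : ℕ → ℕ} {C : ℝ} (hm : Tendsto m atTop atTop)
    (he : ∀ᶠ i in atTop, ‖e i‖ ≤ C) :
    Tendsto (fun i => ((m i : ℝ))⁻¹ • e i) atTop (𝓝 0) :=
  (tendsto_inv_atTop_zero.comp (tendsto_natCast_atTop_atTop.comp hm)).zero_smul_isBoundedUnder_le
    (isBoundedUnder_of_eventually_le he)

lemma mem_rotSet_of_tendsto {G : ℝ × ℝ → ℝ × ℝ} {v : ℝ × ℝ} {x : ℕ → ℝ × ℝ} {m : ℕ → ℕ}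
    (hm : Tendsto m atTop atTop)
    (hlim : Tendsto (fun i => ((m i : ℝ))⁻¹ • (G^[m i] (x i) - x i)) atTop (𝓝 v)) :
    v ∈ rotSet G := by
  obtain ⟨N, hN⟩ := eventually_atTop.1 (hm.eventually_gt_atTop 0)
  exact ⟨fun i => x (i + N), fun i => m (i + N), fun i => hN _ (by omega),
    (tendsto_add_atTop_iff_nat N).2 hm, (tendsto_add_atTop_iff_nat N).2 hlim⟩

section matAct

variable (A B : Matrix (Fin 2) (Fin 2) ℤ)

lemma matAct_add (u v : ℝ × ℝ) : matAct A (u + v) = matAct A u + matAct A v := by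
  simp only [matAct, Prod.ext_iff, Prod.fst_add, Prod.snd_add]
  constructor <;> ring

lemma matAct_smul (c : ℝ) (v : ℝ × ℝ) : matAct A (c • v) = c • matAct A v := by
  simp only [matAct, Prod.ext_iff, Prod.smul_fst, Prod.smul_snd, smul_eq_mul]
  constructor <;> ring

lemma matAct_mul (v : ℝ × ℝ) : matAct (A * B) v = matAct A (matAct B v) := by
  simp only [matAct, Prod.ext_iff, Matrix.mul_apply, Fin.sum_univ_two]
  push_cast
  constructor <;> ring

lemma matAct_one (v : ℝ × ℝ) : matAct 1 v = v := by
  simp [matAct]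

def matActLinearMap : (ℝ × ℝ) →ₗ[ℝ] (ℝ × ℝ) where
  toFun := matAct A
  map_add' := matAct_add A
  map_smul' := matAct_smul A

noncomputable def matActEquiv (hA : IsUnit A.det) : (ℝ × ℝ) ≃L[ℝ] (ℝ × ℝ) :=
  LinearEquiv.toContinuousLinearEquiv <|
    LinearEquiv.ofLinearMap (matActLinearMap A) (matActLinearMap A⁻¹)
      (LinearMap.ext fun v => by
        simp [matActLinearMap, ← matAct_mul, A.mul_nonsing_inv hA, matAct_one])
      (LinearMap.ext fun v => by
        simp [matActLinearMap, ← matAct_mul, A.nonsing_inv_mul hA, matAct_one])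

@[simp]
lemma matActEquiv_apply (hA : IsUnit A.det) (v : ℝ × ℝ) : matActEquiv A hA v = matAct A v :=
  rfl

end matAct

lemma exists_norm_le_of_periodic {E : Type*} [SeminormedAddCommGroup E] {g : ℝ × ℝ → E}
    (hg : Continuous g) (hper : ∀ (x : ℝ × ℝ) (p q : ℤ), g (x + ((p : ℝ), (q : ℝ))) = g x) :
    ∃ C : ℝ, ∀ x, ‖g x‖ ≤ C := by
  obtain ⟨C, hC⟩ :=
    (isCompact_Icc (a := ((0 : ℝ), (0 : ℝ))) (b := (1, 1))).exists_bound_of_continuousOn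
      hg.continuousOn
  refine ⟨C, fun x => ?_⟩
  have hx : x = (Int.fract x.1, Int.fract x.2) + ((⌊x.1⌋ : ℝ), (⌊x.2⌋ : ℝ)) :=
    Prod.ext (Int.fract_add_floor x.1).symm (Int.fract_add_floor x.2).symm
  rw [hx, hper]
  exact hC _ ⟨⟨Int.fract_nonneg _, Int.fract_nonneg _⟩,
    ⟨(Int.fract_lt_one _).le, (Int.fract_lt_one _).le⟩⟩

section boundedDisplacement

variable {G : ℝ × ℝ → ℝ × ℝ} {C : ℝ}

lemma norm_iterate_sub_le (hG : ∀ x, ‖G x - x‖ ≤ C) (k : ℕ) (x : ℝ × ℝ) :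
    ‖G^[k] x - x‖ ≤ k * C := by
  induction k with
  | zero => simp
  | succ k ih =>
    calc ‖G^[k + 1] x - x‖ = ‖(G (G^[k] x) - G^[k] x) + (G^[k] x - x)‖ := by
          rw [iterate_succ_apply', sub_add_sub_cancel]
      _ ≤ C + k * C := (norm_add_le _ _).trans (add_le_add (hG _) ih)
      _ = (k + 1 : ℕ) * C := by push_cast; ring

lemma tendsto_inv_smul_iterate_sub_of_le (hG : ∀ x, ‖G x - x‖ ≤ C) {x : ℕ → ℝ × ℝ}
    {m m' : ℕ → ℕ} {u : ℝ × ℝ} (D : ℕ) (hm' : Tendsto m' atTop atTop)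
    (hle : ∀ i, m' i ≤ m i ∧ m i ≤ m' i + D)
    (hlim : Tendsto (fun i => ((m i : ℝ))⁻¹ • (G^[m i] (x i) - x i)) atTop (𝓝 u)) :
    Tendsto (fun i => ((m' i : ℝ))⁻¹ • (G^[m' i] (x i) - x i)) atTop (𝓝 u) := by
  have hC : 0 ≤ C := (norm_nonneg _).trans (hG 0)
  have hpos : ∀ᶠ i in atTop, 0 < m' i := hm'.eventually_gt_atTop 0
  have hratio : Tendsto (fun i => (m' i : ℝ)⁻¹ * m i) atTop (𝓝 1) := by
    have hgap := tendsto_inv_smul_zero_of_norm_le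
      (e := fun i => ((m i - m' i : ℕ) : ℝ)) (C := D) hm'
      (Eventually.of_forall fun i => by
        rw [Real.norm_natCast]; exact_mod_cast (show m i - m' i ≤ D by have := hle i; omega))
    rw [← add_zero (1 : ℝ)]
    refine (hgap.const_add 1).congr' ?_
    filter_upwards [hpos] with i hi
    rw [Nat.cast_sub (hle i).1, smul_eq_mul, mul_sub, inv_mul_cancel₀ (by positivity)]
    ring
  have hshift := tendsto_inv_smul_zero_of_norm_le
    (e := fun i => G^[m i] (x i) - G^[m' i] (x i)) (C := D * C) hm'
    (Eventually.of_forall fun i => by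
      obtain ⟨k, hk⟩ := Nat.exists_eq_add_of_le (hle i).1
      rw [hk, add_comm, iterate_add_apply]
      refine (norm_iterate_sub_le hG k _).trans (mul_le_mul_of_nonneg_right ?_ hC)
      exact_mod_cast (show k ≤ D by have := hle i; omega))
  rw [← one_smul ℝ u, ← sub_zero ((1 : ℝ) • u)]
  refine ((hratio.smul hlim).sub hshift).congr' ?_
  filter_upwards [hpos] with i hi
  have hm : (m i : ℝ) ≠ 0 := by exact_mod_cast (hi.trans_le (hle i).1).ne'
  rw [smul_smul, mul_assoc, mul_inv_cancel₀ hm, mul_one, ← smul_sub, sub_sub_sub_cancel_left]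

lemma rotSet_iterate (hG : ∀ x, ‖G x - x‖ ≤ C) {n : ℕ} (hn : 0 < n) :
    rotSet G^[n] = (n : ℝ) • rotSet G := by
  have hn' : (n : ℝ) ≠ 0 := by positivity
  ext w
  rw [Set.mem_smul_set]
  constructor
  · rintro ⟨x, m, hm0, hm, hlim⟩
    refine ⟨(n : ℝ)⁻¹ • w, ⟨x, fun i => n * m i, fun i => Nat.mul_pos hn (hm0 i),
      tendsto_atTop_mono (fun i => Nat.le_mul_of_pos_left _ hn) hm, ?_⟩, smul_inv_smul₀ hn' w⟩
    refine (hlim.const_smul (n : ℝ)⁻¹).congr fun i => ?_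
    rw [← iterate_mul, smul_smul, Nat.cast_mul, mul_inv]
  · rintro ⟨u, ⟨x, m, -, hm, hlim⟩, rfl⟩
    -- Rounding `m i` down to a multiple of `n` changes the orbit segment by boundedly many steps.
    have hq : Tendsto (fun i => m i / n) atTop atTop := (Nat.tendsto_div_const_atTop hn.ne').comp hm
    have hnq := tendsto_inv_smul_iterate_sub_of_le hG (m' := fun i => n * (m i / n)) n
      (tendsto_atTop_mono (fun i => Nat.le_mul_of_pos_left _ hn) hq)
      (fun i => ⟨Nat.mul_div_le _ _, by have := Nat.lt_mul_div_succ (m i) hn; linarith⟩) hlim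
    refine mem_rotSet_of_tendsto (x := x) hq ((hnq.const_smul (n : ℝ)).congr fun i => ?_)
    rw [← iterate_mul, smul_smul, Nat.cast_mul, mul_inv, ← mul_assoc, mul_inv_cancel₀ hn', one_mul]

end boundedDisplacement

lemma rotSet_add_const {G : ℝ × ℝ → ℝ × ℝ} {P : ℝ × ℝ} (hG : Function.Commute G (· + P)) :
    rotSet (fun x => G x + P) = (· + P) '' rotSet G := by
  have hdisp : ∀ (m : ℕ) x, 0 < m →
      (m : ℝ)⁻¹ • ((fun x => G x + P)^[m] x - x) = (m : ℝ)⁻¹ • (G^[m] x - x) + P := by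
    intro m x hm
    have hiter : (fun x => G x + P)^[m] x = G^[m] x + m • P := by
      rw [show (fun x => G x + P) = (· + P) ∘ G from rfl, hG.symm.comp_iterate, comp_apply,
        add_right_iterate_apply]
    rw [hiter, add_sub_right_comm, smul_add, ← Nat.cast_smul_eq_nsmul ℝ, smul_smul,
      inv_mul_cancel₀ (by positivity), one_smul]
  ext v
  constructor
  · rintro ⟨x, m, hm0, hm, hlim⟩
    refine ⟨v - P, ⟨x, m, hm0, hm, ?_⟩, sub_add_cancel v P⟩
    simpa only [hdisp _ _ (hm0 _), add_sub_cancel_right] using hlim.sub_const P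
  · rintro ⟨u, ⟨x, m, hm0, hm, hlim⟩, rfl⟩
    exact ⟨x, m, hm0, hm, by simpa only [hdisp _ _ (hm0 _)] using hlim.add_const P⟩

lemma rotSet_mapsTo_of_semiconj {F K H : ℝ × ℝ → ℝ × ℝ} (L : (ℝ × ℝ) →L[ℝ] (ℝ × ℝ)) {C : ℝ}
    (hH : ∀ x, ‖H x - L x‖ ≤ C) (hsemi : Semiconj H F K) :
    MapsTo L (rotSet F) (rotSet K) := by
  rintro u ⟨x, m, hm0, hm, hlim⟩
  refine ⟨fun i => H (x i), m, hm0, hm, ?_⟩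
  have hdefect := tendsto_inv_smul_zero_of_norm_le
    (e := fun i => (H (F^[m i] (x i)) - L (F^[m i] (x i))) - (H (x i) - L (x i))) (C := C + C) hm
    (Eventually.of_forall fun i => (norm_sub_le _ _).trans (add_le_add (hH _) (hH _)))
  rw [← add_zero (L u)]
  refine (((L.continuous.tendsto u).comp hlim).add hdefect).congr fun i => ?_
  rw [← (hsemi.iterate_right _).eq, comp_apply, map_smul, map_sub, ← smul_add]
  congr 1
  abel

lemma rotSet_eq_image_of_semiconj {F K : ℝ × ℝ → ℝ × ℝ} (H : (ℝ × ℝ) ≃ (ℝ × ℝ))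
    (L : (ℝ × ℝ) ≃L[ℝ] (ℝ × ℝ)) {C : ℝ} (hH : ∀ x, ‖H x - L x‖ ≤ C) (hsemi : Semiconj H F K) :
    rotSet K = L '' rotSet F := by
  refine Subset.antisymm (fun w hw => ⟨L.symm w, ?_, L.apply_symm_apply w⟩)
    (rotSet_mapsTo_of_semiconj (L : (ℝ × ℝ) →L[ℝ] (ℝ × ℝ)) hH hsemi).image_subset
  let L' : (ℝ × ℝ) →L[ℝ] (ℝ × ℝ) := L.symm
  have hH' : ∀ y, ‖H.symm y - L' y‖ ≤ ‖L'‖ * C := fun y => by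
    have : H.symm y - L' y = L' (L (H.symm y) - H (H.symm y)) := by simp [L']
    rw [this]
    exact L'.le_opNorm_of_le (by rw [norm_sub_rev]; exact hH _)
  exact rotSet_mapsTo_of_semiconj L' hH' (hsemi.inverse_left H.left_inv H.right_inv) hw

/-- if `F`, `H` are lifts of torus homeomorphisms `f`, `h` with
`h ∘ f ∘ h⁻¹ = fⁿ`, i.e. `H ∘ F ∘ H⁻¹ = Fⁿ + P₀` for some integer vector `P₀`, then
`ρ(F) = (1/n)(A(ρ(F)) + Q)` for some integer vector `Q`. -/
theorem rotation_set_self_similar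
    (n : ℕ) (hn : 2 ≤ n)
    (F H : (ℝ × ℝ) ≃ₜ (ℝ × ℝ)) (A : Matrix (Fin 2) (Fin 2) ℤ)
    (hA : A.det = 1 ∨ A.det = -1)
    (hF : ∀ (x : ℝ × ℝ) (p q : ℤ),
      F (x + ((p : ℝ), (q : ℝ))) = F x + ((p : ℝ), (q : ℝ)))
    (hH : ∀ (x : ℝ × ℝ) (p q : ℤ),
      H (x + ((p : ℝ), (q : ℝ))) = H x + matAct A ((p : ℝ), (q : ℝ)))
    (P₀ : ℤ × ℤ)
    (hconj : ∀ x : ℝ × ℝ,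
      H (F (H.symm x)) = (⇑F)^[n] x + ((P₀.1 : ℝ), (P₀.2 : ℝ))) :
    ∃ Q : ℤ × ℤ, rotSet ⇑F =
      (fun v : ℝ × ℝ => ((n : ℝ))⁻¹ • (matAct A v + ((Q.1 : ℝ), (Q.2 : ℝ)))) ''
        rotSet ⇑F := by
  set P : ℝ × ℝ := ((P₀.1 : ℝ), (P₀.2 : ℝ))
  set L := matActEquiv A (Int.isUnit_iff.2 hA)
  obtain ⟨CF, hCF⟩ : ∃ C : ℝ, ∀ x, ‖F x - x‖ ≤ C :=
    exists_norm_le_of_periodic (F.continuous.sub continuous_id) fun x p q => by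
      simp only [hF]; abel
  obtain ⟨CH, hCH⟩ : ∃ C : ℝ, ∀ x, ‖H x - L x‖ ≤ C :=
    exists_norm_le_of_periodic (H.continuous.sub L.continuous) fun x p q => by
      simp only [L, matActEquiv_apply, hH, matAct_add]; abel
  have hsemi : Semiconj H.toEquiv F (fun x => F^[n] x + P) := fun x => by
    simpa using hconj (H x)
  have hFP : Function.Commute F (· + P) := fun x => hF x P₀.1 P₀.2
  have hself : L '' rotSet F = (· + P) '' ((n : ℝ) • rotSet F) := by
    rw [← rotSet_eq_image_of_semiconj H.toEquiv L hCH hsemi, rotSet_add_const (hFP.iterate_left n),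
      rotSet_iterate hCF (by omega)]
  have hn' : (n : ℝ) ≠ 0 := by positivity
  refine ⟨-P₀, ?_⟩
  calc rotSet F = (fun w => (n : ℝ)⁻¹ • (w - P)) '' ((· + P) '' ((n : ℝ) • rotSet F)) := by
        rw [← Set.image_smul, Set.image_image, Set.image_image]
        simp [hn']
    _ = _ := by
        rw [← hself, Set.image_image]
        simp [L, P, sub_eq_add_neg]
end
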